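/- arXiv:math/0306261 — 4 statements merged into one kernel-verified Lean document; each statement's English description precedes it below -/
import Mathlib

section
/- If F : ℝ × ℝ → ℝ is smooth, decays with its derivatives as x → ∞ and as |ξ| → ∞, satisfies D·F_xx + (a−ξ)F_x + F_ξξ + (ξF)_ξ = 0 on (0,∞)×ℝ, the boundary condition D·F_x(0,ξ) + (a−ξ)F(0,ξ) = 0 for all ξ, and the normalization ∫_ℝ ∫_0^∞ F(x,ξ) dx dξ = 1, then the marginal M(ξ) = ∫_0^∞ F(x,ξ) dx equals (1/√(2π))·e^{−ξ²/2}. -/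
open MeasureTheory Filter Set Real

/-- integrating the elliptic PDE in x, the marginal density in ξ is
standard Gaussian. -/
theorem marginal_is_gaussian
    (D a : ℝ) (hD : 0 < D) (ha : 0 < a)
    (F Fx Fxx Fxi Fxixi : ℝ → ℝ → ℝ)
    (hFsmooth : ContDiff ℝ (⊤ : ℕ∞) (fun p : ℝ × ℝ => F p.1 p.2))
    (hFx : ∀ x ξ, HasDerivAt (fun t => F t ξ) (Fx x ξ) x)
    (hFxx : ∀ x ξ, HasDerivAt (fun t => Fx t ξ) (Fxx x ξ) x)
    (hFxi : ∀ x ξ, HasDerivAt (fun s => F x s) (Fxi x ξ) ξ)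
    (hFxixi : ∀ x ξ, HasDerivAt (fun s => Fxi x s) (Fxixi x ξ) ξ)
    -- the PDE in the interior
    (hPDE : ∀ x ξ, 0 < x →
      D * Fxx x ξ + (a - ξ) * Fx x ξ + Fxixi x ξ + (F x ξ + ξ * Fxi x ξ) = 0)
    -- the no-flux boundary condition at x = 0
    (hBC : ∀ ξ, D * Fx 0 ξ + (a - ξ) * F 0 ξ = 0)
    -- decay as x → ∞
    (hdecF : ∀ ξ, Tendsto (fun x => F x ξ) atTop (nhds 0))
    (hdecFx : ∀ ξ, Tendsto (fun x => Fx x ξ) atTop (nhds 0))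
    -- integrability in x of F and its derivatives
    (hintF : ∀ ξ, IntegrableOn (fun x => F x ξ) (Ioi 0))
    (hintFx : ∀ ξ, IntegrableOn (fun x => Fx x ξ) (Ioi 0))
    (hintFxx : ∀ ξ, IntegrableOn (fun x => Fxx x ξ) (Ioi 0))
    (hintFxi : ∀ ξ, IntegrableOn (fun x => Fxi x ξ) (Ioi 0))
    (hintFxixi : ∀ ξ, IntegrableOn (fun x => Fxixi x ξ) (Ioi 0))
    -- the marginal and its derivatives (differentiation under the integral sign)
    (M M' : ℝ → ℝ)
    (hM : ∀ ξ, M ξ = ∫ x in Ioi (0:ℝ), F x ξ)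
    (hM' : ∀ ξ, HasDerivAt M (M' ξ) ξ)
    (hM'eq : ∀ ξ, M' ξ = ∫ x in Ioi (0:ℝ), Fxi x ξ)
    (hM'' : ∀ ξ, HasDerivAt M' (∫ x in Ioi (0:ℝ), Fxixi x ξ) ξ)
    -- decay of the marginal as |ξ| → ∞
    (hMbot : Tendsto M atBot (nhds 0)) (hMtop : Tendsto M atTop (nhds 0))
    (hM'bot : Tendsto M' atBot (nhds 0)) (hM'top : Tendsto M' atTop (nhds 0))
    (hMint : Integrable M)
    -- normalization
    (hnorm : ∫ ξ : ℝ, ∫ x in Ioi (0:ℝ), F x ξ = 1) :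
    ∀ ξ : ℝ, M ξ = (1 / Real.sqrt (2 * Real.pi)) * Real.exp (-ξ ^ 2 / 2) := by
  -- Step 1: FTC on (0,∞) for Fx and F
  have hIxx : ∀ ξ, ∫ x in Ioi (0:ℝ), Fxx x ξ = 0 - Fx 0 ξ := fun ξ =>
    integral_Ioi_of_hasDerivAt_of_tendsto
      ((hFxx 0 ξ).continuousAt.continuousWithinAt)
      (fun x _ => hFxx x ξ) (hintFxx ξ) (hdecFx ξ)
  have hIx : ∀ ξ, ∫ x in Ioi (0:ℝ), Fx x ξ = 0 - F 0 ξ := fun ξ =>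
    integral_Ioi_of_hasDerivAt_of_tendsto
      ((hFx 0 ξ).continuousAt.continuousWithinAt)
      (fun x _ => hFx x ξ) (hintFx ξ) (hdecF ξ)
  -- Step 2: integrate the PDE over x ∈ (0,∞)
  have key : ∀ ξ, (∫ x in Ioi (0:ℝ), Fxixi x ξ) = -(M ξ + ξ * M' ξ) := by
    intro ξ
    have hzero : ∫ x in Ioi (0:ℝ),
        (D * Fxx x ξ + (a - ξ) * Fx x ξ + Fxixi x ξ + (F x ξ + ξ * Fxi x ξ)) = 0 := by
      rw [setIntegral_congr_fun measurableSet_Ioi (fun x hx => hPDE x ξ hx)]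
      simp
    have h1 : IntegrableOn (fun x => D * Fxx x ξ) (Ioi 0) := (hintFxx ξ).const_mul _
    have h2 : IntegrableOn (fun x => (a - ξ) * Fx x ξ) (Ioi 0) := (hintFx ξ).const_mul _
    have h5 : IntegrableOn (fun x => ξ * Fxi x ξ) (Ioi 0) := (hintFxi ξ).const_mul _
    have h12 : IntegrableOn (fun x => D * Fxx x ξ + (a - ξ) * Fx x ξ) (Ioi 0) := h1.add h2
    have h123 : IntegrableOn (fun x => D * Fxx x ξ + (a - ξ) * Fx x ξ + Fxixi x ξ) (Ioi 0) :=
      h12.add (hintFxixi ξ)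
    have h45 : IntegrableOn (fun x => F x ξ + ξ * Fxi x ξ) (Ioi 0) := (hintF ξ).add h5
    have hrw : ∫ x in Ioi (0:ℝ),
        (D * Fxx x ξ + (a - ξ) * Fx x ξ + Fxixi x ξ + (F x ξ + ξ * Fxi x ξ))
        = (D * (0 - Fx 0 ξ) + (a - ξ) * (0 - F 0 ξ) + (∫ x in Ioi (0:ℝ), Fxixi x ξ))
          + (M ξ + ξ * M' ξ) := by
      rw [integral_add h123 h45, integral_add h12 (hintFxixi ξ), integral_add h1 h2,
          integral_add (hintF ξ) h5, integral_const_mul, integral_const_mul,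
          integral_const_mul, hIxx ξ, hIx ξ, ← hM ξ, ← hM'eq ξ]
    have h0 : (D * (0 - Fx 0 ξ) + (a - ξ) * (0 - F 0 ξ) + (∫ x in Ioi (0:ℝ), Fxixi x ξ))
        + (M ξ + ξ * M' ξ) = 0 := by rw [← hrw]; exact hzero
    linear_combination h0 + hBC ξ
  -- So M' + ξ M has zero derivative everywhere
  set G : ℝ → ℝ := fun ξ => M' ξ + ξ * M ξ with hG
  have hGderiv : ∀ ξ, HasDerivAt G 0 ξ := by
    intro ξ
    have h1 : HasDerivAt M' (-(M ξ + ξ * M' ξ)) ξ := by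
      have := hM'' ξ; rwa [key ξ] at this
    have h2 : HasDerivAt (fun s => s * M s) (1 * M ξ + ξ * M' ξ) ξ :=
      (hasDerivAt_id ξ).mul (hM' ξ)
    have : HasDerivAt (fun s => M' s + s * M s) (-(M ξ + ξ * M' ξ) + (1 * M ξ + ξ * M' ξ)) ξ :=
      h1.add h2
    convert this using 1
    ring
  have hGconst : ∀ ξ, G ξ = G 0 := fun ξ =>
    is_const_of_deriv_eq_zero (fun x => (hGderiv x).differentiableAt)
      (fun x => (hGderiv x).deriv) ξ 0
  -- The constant c = G 0 must be zero, else M ~ c/ξ is not integrable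
  set c : ℝ := G 0 with hc
  have hξM : ∀ ξ, ξ * M ξ = c - M' ξ := by
    intro ξ
    have := hGconst ξ
    simp only [hG] at this
    linarith
  have hcz : c = 0 := by
    by_contra hcne
    have hc0 : 0 < |c| := abs_pos.mpr hcne
    have htend : Tendsto (fun ξ => ξ * M ξ) atTop (nhds c) := by
      have : Tendsto (fun ξ => c - M' ξ) atTop (nhds (c - 0)) :=
        tendsto_const_nhds.sub hM'top
      rw [sub_zero] at this
      exact this.congr (fun ξ => (hξM ξ).symm)
    have hev : ∀ᶠ ξ in atTop, |ξ * M ξ - c| < |c| / 2 := by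
      have := Metric.tendsto_nhds.mp htend (|c| / 2) (by linarith)
      simpa [Real.dist_eq] using this
    obtain ⟨T, hT⟩ := eventually_atTop.mp (hev.and (eventually_ge_atTop (1 : ℝ)))
    have hIntInv : IntegrableOn (fun x : ℝ => x⁻¹) (Ioi T) := by
      apply Integrable.mono' ((hMint.abs.const_mul (2 / |c|)).integrableOn)
        measurable_inv.aestronglyMeasurable
      filter_upwards [ae_restrict_mem measurableSet_Ioi] with x hx
      obtain ⟨hlt, hx1⟩ := hT x (le_of_lt hx)
      have hx0 : (0:ℝ) < x := lt_of_lt_of_le one_pos hx1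
      have habs : |c| - |x * M x| ≤ |x * M x - c| := by
        have := abs_sub_abs_le_abs_sub c (x * M x)
        rwa [abs_sub_comm] at this
      have key2 : |c| / 2 ≤ x * |M x| := by
        have h := abs_mul x (M x)
        rw [abs_of_pos hx0] at h
        linarith
      rw [Real.norm_eq_abs, abs_of_pos (inv_pos.mpr hx0)]
      have hMx : |c| / (2 * x) ≤ |M x| := by
        rw [div_le_iff₀ (by positivity)]
        nlinarith
      calc x⁻¹ = (2 / |c|) * (|c| / (2 * x)) := by
            field_simp
        _ ≤ (2 / |c|) * |M x| := by
            apply mul_le_mul_of_nonneg_left hMx (by positivity)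
    exact not_IntegrableOn_Ioi_inv hIntInv
  -- M' = -ξ M, so M ξ * exp(ξ²/2) is constant
  have hODE : ∀ ξ, M' ξ = -(ξ * M ξ) := by
    intro ξ; have := hξM ξ; rw [hcz] at this; linarith
  have hHderiv : ∀ ξ, HasDerivAt (fun s => M s * Real.exp (s ^ 2 / 2)) 0 ξ := by
    intro ξ
    have hexp : HasDerivAt (fun s : ℝ => Real.exp (s ^ 2 / 2))
        (Real.exp (ξ ^ 2 / 2) * (2 * ξ ^ 1 / 2)) ξ :=
      (((hasDerivAt_pow 2 ξ)).div_const 2).exp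
    have : HasDerivAt (fun s => M s * Real.exp (s ^ 2 / 2))
        (M' ξ * Real.exp (ξ ^ 2 / 2) + M ξ * (Real.exp (ξ ^ 2 / 2) * (2 * ξ ^ 1 / 2))) ξ :=
      (hM' ξ).mul hexp
    convert this using 1
    rw [hODE ξ]
    ring
  have hHconst : ∀ ξ, M ξ * Real.exp (ξ ^ 2 / 2) = M 0 := by
    intro ξ
    have := is_const_of_deriv_eq_zero (f := fun s => M s * Real.exp (s ^ 2 / 2))
      (fun x => (hHderiv x).differentiableAt) (fun x => (hHderiv x).deriv) ξ 0
    simpa using this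
  have hMform : ∀ ξ, M ξ = M 0 * Real.exp (-ξ ^ 2 / 2) := by
    intro ξ
    have h := hHconst ξ
    have hE : Real.exp (-ξ ^ 2 / 2) = (Real.exp (ξ ^ 2 / 2))⁻¹ := by
      rw [neg_div, Real.exp_neg]
    rw [hE, ← h]
    field_simp
  -- Normalization determines M 0
  have hnorm' : ∫ ξ : ℝ, M ξ = 1 := by
    rw [← hnorm]; exact integral_congr_ae (Filter.Eventually.of_forall (fun ξ => hM ξ))
  have hgauss : ∫ ξ : ℝ, Real.exp (-ξ ^ 2 / 2) = Real.sqrt (2 * Real.pi) := by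
    have h := integral_gaussian (1/2 : ℝ)
    rw [show (Real.pi / (1/2 : ℝ)) = 2 * Real.pi by ring] at h
    rw [← h]
    apply integral_congr_ae (Filter.Eventually.of_forall _)
    intro ξ
    norm_num
    ring_nf
  have hM0 : M 0 = 1 / Real.sqrt (2 * Real.pi) := by
    have h1 : ∫ ξ : ℝ, M 0 * Real.exp (-ξ ^ 2 / 2) = M 0 * Real.sqrt (2 * Real.pi) := by
      rw [integral_const_mul, hgauss]
    have h2 : ∫ ξ : ℝ, M ξ = ∫ ξ : ℝ, M 0 * Real.exp (-ξ ^ 2 / 2) :=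
      integral_congr_ae (Filter.Eventually.of_forall (fun ξ => hMform ξ))
    have hs : Real.sqrt (2 * Real.pi) ≠ 0 := by positivity
    have hval : M 0 * Real.sqrt (2 * Real.pi) = 1 := by rw [← h1, ← h2, hnorm']
    rw [eq_div_iff hs]
    exact hval
  intro ξ
  rw [hMform ξ, hM0]
end

section
/- The only solutions M : ℝ → ℝ of the ODE M''(ξ) + (ξ·M(ξ))' = 0 that are integrable on ℝ are of the form M(ξ) = C·e^{−ξ²/2} for a constant C. -/
/-!
The equation says `(M' + ξ M)' = 0`, so `M' + ξ M = K` for a constant `K`, and variation of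
constants gives `M = M(0) e^{-ξ²/2} + K D` with `D(ξ) = e^{-ξ²/2} ∫₀^ξ e^{t²/2} dt`.
Comparing `e^{t²/2}` with `(t/ξ) e^{t²/2}` shows `D(ξ) ≥ (1 - e^{-1/2}) / ξ` for `ξ ≥ 1`,
so `D` is not integrable and integrability of `M` forces `K = 0`.
-/

open MeasureTheory Real Set

/-- Dawson's function, rescaled: `dawson ξ = √2 F(ξ / √2)` for the classical
`F x = e^{-x²} ∫₀^x e^{s²} ds`. -/
noncomputable def dawson (ξ : ℝ) : ℝ :=
  exp (-ξ ^ 2 / 2) * ∫ t in (0 : ℝ)..ξ, exp (t ^ 2 / 2)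

lemma hasDerivAt_exp_sq_div_two (t : ℝ) :
    HasDerivAt (fun s : ℝ => exp (s ^ 2 / 2)) (t * exp (t ^ 2 / 2)) t := by
  have h : HasDerivAt (fun s : ℝ => s ^ 2 / 2) t t := by
    simpa using (hasDerivAt_pow 2 t).div_const 2
  simpa [mul_comm] using h.exp

lemma exp_sq_div_two_sub_one_le_mul_integral {ξ : ℝ} (hξ : 0 ≤ ξ) :
    exp (ξ ^ 2 / 2) - 1 ≤ ξ * ∫ t in (0 : ℝ)..ξ, exp (t ^ 2 / 2) := by
  have hcont : Continuous fun t : ℝ => exp (t ^ 2 / 2) := by fun_prop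
  calc exp (ξ ^ 2 / 2) - 1 = ∫ t in (0 : ℝ)..ξ, t * exp (t ^ 2 / 2) := by
        rw [intervalIntegral.integral_eq_sub_of_hasDerivAt (fun t _ => hasDerivAt_exp_sq_div_two t)
          ((continuous_id.mul hcont).intervalIntegrable 0 ξ)]
        simp
    _ ≤ ∫ t in (0 : ℝ)..ξ, ξ * exp (t ^ 2 / 2) :=
        intervalIntegral.integral_mono_on hξ ((continuous_id.mul hcont).intervalIntegrable 0 ξ)
          ((continuous_const.mul hcont).intervalIntegrable 0 ξ)
          fun t ht => mul_le_mul_of_nonneg_right ht.2 (exp_pos _).le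
    _ = ξ * ∫ t in (0 : ℝ)..ξ, exp (t ^ 2 / 2) := intervalIntegral.integral_const_mul _ _

lemma one_sub_exp_neg_half_div_le_dawson {ξ : ℝ} (hξ : 1 ≤ ξ) :
    (1 - exp (-1 / 2)) / ξ ≤ dawson ξ := by
  have hξ0 : 0 < ξ := by linarith
  have hexp : exp (-ξ ^ 2 / 2) ≤ exp (-1 / 2) := exp_le_exp.mpr (by nlinarith)
  have hmul : exp (-ξ ^ 2 / 2) * exp (ξ ^ 2 / 2) = 1 := by rw [← exp_add]; simp [neg_div]
  rw [div_le_iff₀ hξ0, dawson, mul_assoc, mul_comm _ ξ]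
  nlinarith [mul_le_mul_of_nonneg_left (exp_sq_div_two_sub_one_le_mul_integral hξ0.le)
    (exp_pos (-ξ ^ 2 / 2)).le]

lemma not_integrableOn_Ioi_dawson : ¬ IntegrableOn dawson (Ioi 1) := by
  intro h
  have hc : 0 < 1 - exp (-1 / 2) := by
    linarith [exp_lt_one_iff.mpr (show (-1 / 2 : ℝ) < 0 by norm_num)]
  refine not_integrableOn_Ioi_inv (a := 1) ((h.const_mul (1 - exp (-1 / 2))⁻¹).mono'
    measurable_inv.aestronglyMeasurable ?_)
  filter_upwards [ae_restrict_mem measurableSet_Ioi] with ξ hξ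
  have hξ0 : 0 < ξ := lt_trans one_pos hξ
  rw [norm_inv, norm_of_nonneg hξ0.le, le_inv_mul_iff₀ hc, ← div_eq_mul_inv]
  exact one_sub_exp_neg_half_div_le_dawson hξ.le

lemma exists_deriv_add_mul_self_eq_const {M : ℝ → ℝ} (hM : ContDiff ℝ 2 M)
    (hODE : ∀ ξ : ℝ, deriv (deriv M) ξ + deriv (fun s => s * M s) ξ = 0) :
    ∃ K : ℝ, ∀ ξ : ℝ, deriv M ξ + ξ * M ξ = K := by
  have hMd : Differentiable ℝ M := hM.differentiable (by norm_num)
  have hM'd : Differentiable ℝ (deriv M) := hM.differentiable_deriv_two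
  have hmul : Differentiable ℝ fun s => s * M s := differentiable_id.mul hMd
  refine ⟨deriv M 0 + 0 * M 0, fun ξ =>
    is_const_of_deriv_eq_zero (hM'd.add hmul) (fun x => ?_) ξ 0⟩
  rw [deriv_add (hM'd x) (hmul x)]
  exact hODE x

lemma eq_gaussian_add_dawson_of_deriv_add_mul_self_eq {M : ℝ → ℝ} {K : ℝ}
    (hM : Differentiable ℝ M) (hK : ∀ ξ : ℝ, deriv M ξ + ξ * M ξ = K) (ξ : ℝ) :
    M ξ = M 0 * exp (-ξ ^ 2 / 2) + K * dawson ξ := by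
  have hh : ∀ t : ℝ, HasDerivAt (fun s => exp (s ^ 2 / 2) * M s) (K * exp (t ^ 2 / 2)) t := by
    intro t
    refine ((hasDerivAt_exp_sq_div_two t).mul (hM t).hasDerivAt).congr_deriv ?_
    rw [← hK t]; ring
  have hftc := intervalIntegral.integral_eq_sub_of_hasDerivAt (fun t _ => hh t)
    ((continuous_const.mul (by fun_prop)).intervalIntegrable 0 ξ)
  rw [intervalIntegral.integral_const_mul] at hftc
  have hmul : exp (-ξ ^ 2 / 2) * exp (ξ ^ 2 / 2) = 1 := by rw [← exp_add]; simp [neg_div]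
  simp only [zero_pow two_ne_zero, zero_div, exp_zero, one_mul] at hftc
  rw [dawson, ← mul_assoc, mul_comm K, mul_assoc, hftc]
  linear_combination (-M ξ) * hmul

/-- the only integrable solutions of M'' + (ξ M)' = 0 on ℝ are
Gaussian multiples. -/
theorem integrable_solutions_are_gaussian
    (M : ℝ → ℝ) (hM : ContDiff ℝ 2 M)
    (hODE : ∀ ξ : ℝ, deriv (deriv M) ξ + deriv (fun s => s * M s) ξ = 0)
    (hint : Integrable M) :
    ∃ C : ℝ, ∀ ξ : ℝ, M ξ = C * Real.exp (-ξ ^ 2 / 2) := by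
  obtain ⟨K, hK⟩ := exists_deriv_add_mul_self_eq_const hM hODE
  have hsol := eq_gaussian_add_dawson_of_deriv_add_mul_self_eq (hM.differentiable (by norm_num)) hK
  have hgauss : Integrable fun ξ : ℝ => M 0 * exp (-ξ ^ 2 / 2) := by
    simpa [neg_div, div_eq_inv_mul] using
      (integrable_exp_neg_mul_sq (b := 1 / 2) (by norm_num)).const_mul (M 0)
  have hK0 : K = 0 := by
    by_contra hK0
    have hdaw : Integrable fun ξ => K * dawson ξ :=
      (hint.sub hgauss).congr (Filter.Eventually.of_forall fun ξ => by simp [hsol ξ])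
    exact not_integrableOn_Ioi_dawson ((hdaw.const_mul K⁻¹).integrableOn.congr_fun
      (fun ξ _ => by field_simp) measurableSet_Ioi)
  exact ⟨M 0, fun ξ => by simpa [hK0] using hsol ξ⟩
end

section
/- Let a > 0, δ ∈ ℝ with δ(δ − a) = n for some n ∈ ℕ, and let F(x, ξ) = e^{−δx}·e^{−ξ²/2}·e^{ξδ}·H_n((ξ − 2δ)/√2). Then F satisfies the degenerate PDE (ξ − a)·F_x = F_ξξ + (ξF)_ξ on ℝ². -/
/-!
Since `F(x, ξ) = e^{-δx} φ(ξ)`, the equation reduces to `φ'' + (ξφ)' = -δ(ξ - a) φ`.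
Conjugating the Fokker–Planck operator `φ ↦ φ'' + (ξφ)'` by the weight `w(ξ) = e^{-ξ²/2 + δξ}`
(for which `w' = (δ - ξ) w`) turns it into `h ↦ h'' + (2δ - ξ) h' + δ(δ - ξ) h` with `φ = w h`.
For `h(ξ) = H_n((ξ - 2δ)/√2)` the Hermite equation reads `h'' = (ξ - 2δ) h' - n h`, so the
conjugated operator acts on `h` as multiplication by `δ(δ - ξ) - n`, which equals `-δ(ξ - a)`
exactly when `δ(δ - a) = n`.
-/

open Real

noncomputable def gaussianWeight (δ s : ℝ) : ℝ := exp (-s ^ 2 / 2) * exp (s * δ)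

theorem hasDerivAt_gaussianWeight (δ s : ℝ) :
    HasDerivAt (gaussianWeight δ) ((δ - s) * gaussianWeight δ s) s := by
  have hquad : HasDerivAt (fun s : ℝ => -s ^ 2 / 2) (-s) s :=
    ((hasDerivAt_pow 2 s).neg.div_const 2).congr_deriv (by ring)
  have hlin : HasDerivAt (fun s : ℝ => s * δ) δ s :=
    ((hasDerivAt_id s).mul_const δ).congr_deriv (one_mul δ)
  exact (hquad.exp.mul hlin.exp).congr_deriv (by rw [gaussianWeight]; ring)

theorem hasDerivAt_comp_sub_div {G G' : ℝ → ℝ} (hG : ∀ y, HasDerivAt G (G' y) y)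
    (c r s : ℝ) :
    HasDerivAt (fun s => G ((s - c) / r)) (G' ((s - c) / r) / r) s :=
  ((hG _).comp s (((hasDerivAt_id s).sub_const c).div_const r)).congr_deriv
    (mul_one_div _ _)

section FokkerPlanck

variable {h h' h'' : ℝ → ℝ} (hh : ∀ s, HasDerivAt h (h' s) s)
  (hh' : ∀ s, HasDerivAt h' (h'' s) s)
include hh

theorem hasDerivAt_gaussianWeight_mul (δ s : ℝ) :
    HasDerivAt (fun s => gaussianWeight δ s * h s)
      (gaussianWeight δ s * ((δ - s) * h s + h' s)) s :=
  ((hasDerivAt_gaussianWeight δ s).mul (hh s)).congr_deriv (by ring)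

include hh'

theorem fokkerPlanck_gaussianWeight_mul (δ ξ : ℝ) :
    deriv (deriv fun s => gaussianWeight δ s * h s) ξ
        + deriv (fun s => s * (gaussianWeight δ s * h s)) ξ =
      gaussianWeight δ ξ * (h'' ξ + (2 * δ - ξ) * h' ξ + δ * (δ - ξ) * h ξ) := by
  have hφ' : deriv (fun s => gaussianWeight δ s * h s) =
      fun s => gaussianWeight δ s * ((δ - s) * h s + h' s) :=
    funext fun s => (hasDerivAt_gaussianWeight_mul hh δ s).deriv
  have hinner : HasDerivAt (fun s => (δ - s) * h s + h' s)
      (-h ξ + (δ - ξ) * h' ξ + h'' ξ) ξ :=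
    ((((hasDerivAt_id ξ).const_sub δ).mul (hh ξ)).add (hh' ξ)).congr_deriv
      (by simp only [id]; ring)
  have hφ'' : HasDerivAt (fun s => gaussianWeight δ s * ((δ - s) * h s + h' s))
      ((δ - ξ) * gaussianWeight δ ξ * ((δ - ξ) * h ξ + h' ξ)
        + gaussianWeight δ ξ * (-h ξ + (δ - ξ) * h' ξ + h'' ξ)) ξ :=
    (hasDerivAt_gaussianWeight δ ξ).mul hinner
  have hflux : HasDerivAt (fun s => s * (gaussianWeight δ s * h s))
      (1 * (gaussianWeight δ ξ * h ξ)
        + ξ * (gaussianWeight δ ξ * ((δ - ξ) * h ξ + h' ξ))) ξ :=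
    (hasDerivAt_id ξ).mul (hasDerivAt_gaussianWeight_mul hh δ ξ)
  rw [hφ', hφ''.deriv, hflux.deriv]
  ring

end FokkerPlanck

theorem hermite_comp_sub_div_sqrt_two {H H' H'' : ℝ → ℝ} {μ : ℝ}
    (hHermite : ∀ y : ℝ, H'' y - 2 * y * H' y + 2 * μ * H y = 0) (c s : ℝ) :
    H'' ((s - c) / √2) / √2 / √2 =
      (s - c) * (H' ((s - c) / √2) / √2) - μ * H ((s - c) / √2) := by
  have hsqrt : √2 * √2 = 2 := mul_self_sqrt zero_le_two
  have := hHermite ((s - c) / √2)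
  rw [div_div, hsqrt]
  linear_combination this / 2

theorem eigenmode_solves_outer_pde_general
    (n : ℕ) (a δ : ℝ) (H H' H'' : ℝ → ℝ)
    (hH' : ∀ y : ℝ, HasDerivAt H (H' y) y)
    (hH'' : ∀ y : ℝ, HasDerivAt H' (H'' y) y)
    (hHermite : ∀ y : ℝ, H'' y - 2 * y * H' y + 2 * n * H y = 0)
    (hδ : δ * (δ - a) = n) :
    let F : ℝ → ℝ → ℝ := fun x ξ =>
      Real.exp (-δ * x) * Real.exp (-ξ ^ 2 / 2) * Real.exp (ξ * δ) *
        H ((ξ - 2 * δ) / Real.sqrt 2)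
    ∀ x ξ : ℝ,
      (ξ - a) * deriv (fun t => F t ξ) x =
        deriv (deriv (fun s => F x s)) ξ + deriv (fun s => s * F x s) ξ := by
  intro F x ξ
  set h : ℝ → ℝ := fun s => H ((s - 2 * δ) / √2)
  have hF : ∀ t s, F t s = exp (-δ * t) * (gaussianWeight δ s * h s) := fun t s => by
    simp only [F, h, gaussianWeight]
    ring
  have hh : ∀ s, HasDerivAt h (H' ((s - 2 * δ) / √2) / √2) s :=
    hasDerivAt_comp_sub_div hH' (2 * δ) √2
  have hh' : ∀ s, HasDerivAt (fun s => H' ((s - 2 * δ) / √2) / √2)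
      (H'' ((s - 2 * δ) / √2) / √2 / √2) s :=
    fun s => (hasDerivAt_comp_sub_div hH'' (2 * δ) √2 s).div_const √2
  have hdecay : HasDerivAt (fun t => exp (-δ * t) * (gaussianWeight δ ξ * h ξ))
      (exp (-δ * x) * -δ * (gaussianWeight δ ξ * h ξ)) x :=
    (((hasDerivAt_id x).const_mul (-δ)).exp.mul_const _).congr_deriv (by simp only [mul_one, id])
  simp only [hF, mul_left_comm _ (exp _), deriv_const_mul_field', hdecay.deriv]
  rw [← mul_add, fokkerPlanck_gaussianWeight_mul hh hh', hermite_comp_sub_div_sqrt_two hHermite]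
  linear_combination (-exp (-δ * x) * (gaussianWeight δ ξ * h ξ)) * hδ

/-- the eigenmodes F(x,ξ) = e^{-δx} e^{-ξ²/2} e^{ξδ} H_n((ξ-2δ)/√2)
solve the degenerate PDE (ξ - a)F_x = F_ξξ + (ξF)_ξ when δ(δ - a) = n.  H is the
n-th physicists' Hermite polynomial, characterized by H'' - 2yH' + 2nH = 0. -/
theorem eigenmode_solves_outer_pde
    (n : ℕ) (a δ : ℝ) (ha : 0 < a) (H H' H'' : ℝ → ℝ)
    (hH' : ∀ y : ℝ, HasDerivAt H (H' y) y)
    (hH'' : ∀ y : ℝ, HasDerivAt H' (H'' y) y)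
    (hHermite : ∀ y : ℝ, H'' y - 2 * y * H' y + 2 * n * H y = 0)
    (hδ : δ * (δ - a) = n) :
    let F : ℝ → ℝ → ℝ := fun x ξ =>
      Real.exp (-δ * x) * Real.exp (-ξ ^ 2 / 2) * Real.exp (ξ * δ) *
        H ((ξ - 2 * δ) / Real.sqrt 2)
    ∀ x ξ : ℝ,
      (ξ - a) * deriv (fun t => F t ξ) x =
        deriv (deriv (fun s => F x s)) ξ + deriv (fun s => s * F x s) ξ :=
  eigenmode_solves_outer_pde_general n a δ H H' H'' hH' hH'' hHermite hδ
end

section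
/- Let a > 0 and δ_m = (a + √(a²+4m))/2. For fixed n ≥ 1, the infinite product ∏_{m≥1, m≠n} (δ_m/(δ_m − δ_n))·exp(−δ_n/√m − n/(2m)) converges absolutely. -/
/-!
Write s = √m, D = δ_m, d = δ_n and y = d/s + n/(2s²). Then the m-th factor minus one is
D/(D - d) · ((e^{-y} - (1 - y + y²/2)) + (d/D - y + y²/2)). The first bracket is O(y³) = O(s⁻³).
In the second the terms of order s⁻¹ and s⁻² cancel, because 1/D = (D - a)/s² and d² = ad + n,
and what is left is O(s⁻³) because 2D - a - 2s = a²/(2D - a + 2s). So |f_m - 1| = O(m^{-3/2}) is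
summable, and a real product ∏ (1 + u_m) with ∑ |u_m| < ∞ converges.
-/

open Real Filter

lemma abs_exp_sub_taylor_two_le {x : ℝ} (hx : |x| ≤ 1) :
    |exp x - (1 + x + x ^ 2 / 2)| ≤ |x| ^ 3 := by
  have h := Real.exp_bound hx (n := 3) (by norm_num)
  norm_num [Finset.sum_range_succ, Nat.factorial] at h
  exact h.trans (by nlinarith [pow_nonneg (abs_nonneg x) 3])

lemma two_mul_sub_sub_two_mul_bounds {a s D : ℝ} (hs : 0 < s) (hD : D ^ 2 = a * D + s ^ 2)
    (hsD : s ≤ D) : 0 ≤ 2 * D - a - 2 * s ∧ 2 * D - a - 2 * s ≤ a ^ 2 / (4 * s) := by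
  have hprod : (2 * D - a - 2 * s) * (2 * D - a + 2 * s) = a ^ 2 := by
    linear_combination 4 * hD
  have hnonneg : 0 ≤ 2 * D - a - 2 * s := by nlinarith
  refine ⟨hnonneg, ?_⟩
  rw [le_div_iff₀ (by positivity)]
  nlinarith

section RootExpansion

variable {a d ν s D : ℝ}

lemma div_sub_taylor_eq (hs : 0 < s) (hd_sq : d ^ 2 = a * d + ν) (hD : D ^ 2 = a * D + s ^ 2)
    (hsD : s ≤ D) :
    d / D - (d / s + ν / (2 * s ^ 2)) + (d / s + ν / (2 * s ^ 2)) ^ 2 / 2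
      = d * (2 * D - a - 2 * s) / (2 * s ^ 2) + d * ν / (2 * s ^ 3) + ν ^ 2 / (8 * s ^ 4) := by
  have hD0 : D ≠ 0 := (hs.trans_le hsD).ne'
  field_simp
  linear_combination (-64 * d * s ^ 2) * hD + (32 * s ^ 2 * D) * hd_sq

lemma abs_div_sub_taylor_le (hs : 1 ≤ s) (hd : 0 ≤ d) (hν : 0 ≤ ν)
    (hd_sq : d ^ 2 = a * d + ν) (hD : D ^ 2 = a * D + s ^ 2) (hsD : s ≤ D) :
    |d / D - (d / s + ν / (2 * s ^ 2)) + (d / s + ν / (2 * s ^ 2)) ^ 2 / 2|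
      ≤ (d * a ^ 2 / 8 + d * ν / 2 + ν ^ 2 / 8) / s ^ 3 := by
  have hs0 : 0 < s := one_pos.trans_le hs
  obtain ⟨hgap₀, hgap⟩ := two_mul_sub_sub_two_mul_bounds hs0 hD hsD
  calc _ = d * (2 * D - a - 2 * s) / (2 * s ^ 2) + d * ν / (2 * s ^ 3) + ν ^ 2 / (8 * s ^ 4) := by
        rw [div_sub_taylor_eq hs0 hd_sq hD hsD, abs_of_nonneg (by positivity)]
    _ ≤ d * (a ^ 2 / (4 * s)) / (2 * s ^ 2) + d * ν / (2 * s ^ 3) + ν ^ 2 / (8 * s ^ 3) := by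
        have hs34 : s ^ 3 ≤ s ^ 4 := pow_le_pow_right₀ hs (by norm_num)
        gcongr
    _ = (d * a ^ 2 / 8 + d * ν / 2 + ν ^ 2 / 8) / s ^ 3 := by
        field_simp
        ring

lemma abs_mul_exp_sub_one_le (hd : 0 ≤ d) (hν : 0 ≤ ν) (hs : 2 * d + ν + 1 ≤ s)
    (hd_sq : d ^ 2 = a * d + ν) (hD : D ^ 2 = a * D + s ^ 2) (hsD : s ≤ D) :
    |D / (D - d) * exp (-(d / s + ν / (2 * s ^ 2))) - 1|
      ≤ 2 * (d * a ^ 2 / 8 + d * ν / 2 + ν ^ 2 / 8 + (d + ν / 2) ^ 3) / s ^ 3 := by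
  have hs1 : 1 ≤ s := by linarith
  have hs0 : 0 < s := by linarith
  set y := d / s + ν / (2 * s ^ 2) with hy
  have hy0 : 0 ≤ y := by positivity
  have hy_le : y ≤ (d + ν / 2) / s := by
    rw [hy, add_div, div_div, sq, ← mul_assoc]
    gcongr
    nlinarith
  have hy1 : |-y| ≤ 1 := by
    rw [abs_neg, abs_of_nonneg hy0]
    exact hy_le.trans ((div_le_one hs0).2 (by linarith))
  have hD0 : 0 < D := by linarith
  have hDd : 0 < D - d := by linarith
  have hratio : |D / (D - d)| ≤ 2 := by
    rw [abs_of_pos (by positivity), div_le_iff₀ hDd]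
    linarith
  have hsplit : D / (D - d) * exp (-y) - 1
      = D / (D - d) * ((exp (-y) - (1 + -y + (-y) ^ 2 / 2)) + (d / D - y + y ^ 2 / 2)) := by
    field_simp
    ring
  have hexp : |exp (-y) - (1 + -y + (-y) ^ 2 / 2)| ≤ (d + ν / 2) ^ 3 / s ^ 3 := by
    refine (abs_exp_sub_taylor_two_le hy1).trans ?_
    rw [abs_neg, abs_of_nonneg hy0, ← div_pow]
    gcongr
  rw [hsplit, abs_mul]
  calc _ ≤ 2 * ((d + ν / 2) ^ 3 / s ^ 3 + (d * a ^ 2 / 8 + d * ν / 2 + ν ^ 2 / 8) / s ^ 3) := by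
        gcongr
        exact (abs_add_le _ _).trans
          (add_le_add hexp (abs_div_sub_taylor_le hs1 hd hν hd_sq hD hsD))
    _ = _ := by ring

end RootExpansion

noncomputable def quadRoot (a x : ℝ) : ℝ := (a + √(a ^ 2 + 4 * x)) / 2

lemma quadRoot_sq (a : ℝ) {x : ℝ} (hx : 0 ≤ x) : quadRoot a x ^ 2 = a * quadRoot a x + x := by
  have h := Real.sq_sqrt (by positivity : 0 ≤ a ^ 2 + 4 * x)
  unfold quadRoot
  linear_combination h / 4

lemma sqrt_le_quadRoot {a x : ℝ} (ha : 0 ≤ a) (hx : 0 ≤ x) : √x ≤ quadRoot a x := by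
  have h : 2 * √x ≤ √(a ^ 2 + 4 * x) := by
    rw [Real.le_sqrt (by positivity) (by positivity), mul_pow, Real.sq_sqrt hx]
    nlinarith
  unfold quadRoot
  linarith

lemma eventually_abs_factor_sub_one_le {a : ℝ} (ha : 0 ≤ a) (n : ℕ) :
    ∃ C, ∀ᶠ m : ℕ in atTop,
      |quadRoot a m / (quadRoot a m - quadRoot a n) *
        exp (-quadRoot a n / √m - n / (2 * m)) - 1| ≤ C / √m ^ 3 := by
  set d := quadRoot a n
  have hd : 0 ≤ d := (Real.sqrt_nonneg _).trans (sqrt_le_quadRoot ha n.cast_nonneg)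
  refine ⟨2 * (d * a ^ 2 / 8 + d * n / 2 + n ^ 2 / 8 + (d + n / 2) ^ 3),
    ((tendsto_sqrt_atTop.comp tendsto_natCast_atTop_atTop).eventually_ge_atTop
    (2 * d + n + 1)).mono fun m hm => ?_⟩
  have hsq : √(m : ℝ) ^ 2 = m := Real.sq_sqrt m.cast_nonneg
  rw [show -d / √m - n / (2 * m) = -(d / √m + n / (2 * √m ^ 2)) by rw [hsq]; ring]
  exact abs_mul_exp_sub_one_le hd n.cast_nonneg hm (quadRoot_sq a n.cast_nonneg)
    (by rw [hsq]; exact quadRoot_sq a m.cast_nonneg) (sqrt_le_quadRoot ha m.cast_nonneg)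

lemma summable_div_sqrt_pow_three (C : ℝ) : Summable fun m : ℕ => C / √m ^ 3 := by
  refine ((Real.summable_nat_rpow_inv.mpr (by norm_num : (1 : ℝ) < 3 / 2)).mul_left C).congr
    fun m => ?_
  rw [Real.sqrt_eq_rpow, ← Real.rpow_natCast, ← Real.rpow_mul m.cast_nonneg]
  norm_num [div_eq_mul_inv]

theorem coefficient_product_converges_general (a : ℝ) (ha : 0 < a) (n : ℕ) :
    let δ : ℕ → ℝ := fun m => (a + Real.sqrt (a ^ 2 + 4 * m)) / 2
    let f : ℕ → ℝ := fun m =>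
      if m = 0 ∨ m = n then 1
      else δ m / (δ m - δ n) * Real.exp (-δ n / Real.sqrt m - n / (2 * m))
    Summable (fun m : ℕ => |f m - 1|) ∧ Multipliable f := by
  intro δ f
  obtain ⟨C, hC⟩ := eventually_abs_factor_sub_one_le ha.le n
  have hsum : Summable fun m => |f m - 1| := by
    refine (summable_div_sqrt_pow_three C).of_norm_bounded_eventually_nat ?_
    filter_upwards [hC, eventually_gt_atTop n] with m hm hnm
    have hm_ne : ¬(m = 0 ∨ m = n) := by omega
    simp only [f, if_neg hm_ne, Real.norm_eq_abs, abs_abs]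
    exact hm
  exact ⟨hsum, by simpa using Real.multipliable_one_add_of_summable hsum.of_abs⟩

/-- for fixed n ≥ 1, the product over m ≥ 1, m ≠ n of
(δ_m/(δ_m - δ_n))·exp(-δ_n/√m - n/(2m)) converges absolutely (factors at m = 0
and m = n are set to 1). -/
theorem coefficient_product_converges (a : ℝ) (ha : 0 < a) (n : ℕ) (hn : 1 ≤ n) :
    let δ : ℕ → ℝ := fun m => (a + Real.sqrt (a ^ 2 + 4 * m)) / 2
    let f : ℕ → ℝ := fun m =>
      if m = 0 ∨ m = n then 1
      else δ m / (δ m - δ n) * Real.exp (-δ n / Real.sqrt m - n / (2 * m))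
    Summable (fun m : ℕ => |f m - 1|) ∧ Multipliable f :=
  coefficient_product_converges_general a ha n
end
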